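/- Let $M \ge 1$ be an integer, $\delta > 0$, and let $W \in \mathbb{R}^M$ and $\lambda \in \mathbb{R}^M$ satisfy $\lambda_m \ge \delta$ for all $m$. Then $\Big(\min_{1\le m \le M} W_m\Big)\Big(\sum_{m=1}^M \lambda_m\Big) - \langle \lambda, W \rangle \le -\delta\, \|W_\perp\|$, where $W_\perp := W - ((1/M)\sum_{m=1}^M W_m)\mathbf{1}$, $\mathbf{1} \in \mathbb{R}^M$ is the all-ones vector, and $\|\cdot\|$ is the Euclidean norm. -/

import Mathlib

/-!
The mean `μ = (∑ m, W m) / M` minimises `c ↦ ‖W - c • 𝟏‖`, since `W - μ • 𝟏` is orthogonal to `𝟏`.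
Hence `‖W⊥‖ ≤ ‖W - W_min • 𝟏‖ ≤ ∑ m, (W m - W_min)`, the ℓ² norm being at most the ℓ¹ norm.
On the other side, `W_min * ∑ m, λ m - ⟨λ, W⟩ = -∑ m, λ m * (W m - W_min) ≤ -δ * ∑ m, (W m - W_min)`.
-/

noncomputable def onesVec (M : ℕ) : EuclideanSpace ℝ (Fin M) :=
  (WithLp.equiv 2 (Fin M → ℝ)).symm (fun _ => 1)

open Finset
open scoped InnerProductSpace

@[simp]
lemma onesVec_apply {M : ℕ} (m : Fin M) : onesVec M m = 1 := rfl

lemma inner_onesVec_right {M : ℕ} (W : EuclideanSpace ℝ (Fin M)) :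
    ⟪W, onesVec M⟫_ℝ = ∑ m, W m := by
  simp [PiLp.inner_apply]

lemma inner_sub_mean_smul_onesVec {M : ℕ} (W : EuclideanSpace ℝ (Fin M)) :
    ⟪W - ((∑ m, W m) / M) • onesVec M, onesVec M⟫_ℝ = 0 := by
  rw [inner_sub_left, real_inner_smul_left, inner_onesVec_right, inner_onesVec_right]
  simp only [onesVec_apply, sum_const, card_univ, Fintype.card_fin, nsmul_eq_mul, mul_one]
  rw [div_mul_cancel_of_imp fun hM => by obtain rfl := Nat.cast_eq_zero.mp hM; simp]
  exact sub_self _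

lemma norm_sub_mean_smul_onesVec_le {M : ℕ} (W : EuclideanSpace ℝ (Fin M)) (c : ℝ) :
    ‖W - ((∑ m, W m) / M) • onesVec M‖ ≤ ‖W - c • onesVec M‖ := by
  set μ := (∑ m, W m) / M
  have hsplit : W - c • onesVec M = (W - μ • onesVec M) + (μ - c) • onesVec M := by
    rw [sub_smul]; abel
  have hpyth := norm_add_sq_eq_norm_sq_add_norm_sq_real
    (by rw [real_inner_smul_right, inner_sub_mean_smul_onesVec, mul_zero] :
      ⟪W - μ • onesVec M, (μ - c) • onesVec M⟫_ℝ = 0)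
  rw [← hsplit] at hpyth
  exact (mul_self_le_mul_self_iff (norm_nonneg _) (norm_nonneg _)).mpr
    (hpyth ▸ le_add_of_nonneg_right (mul_self_nonneg _))

lemma EuclideanSpace.norm_le_sum_norm {𝕜 ι : Type*} [RCLike 𝕜] [Fintype ι]
    (x : EuclideanSpace 𝕜 ι) : ‖x‖ ≤ ∑ i, ‖x i‖ := by
  rw [EuclideanSpace.norm_eq, Real.sqrt_le_iff]
  exact ⟨by positivity, sum_sq_le_sq_sum_of_nonneg fun i _ => norm_nonneg _⟩

lemma Finset.mul_sum_sub_sum_mul_le {ι : Type*} (s : Finset ι) {lam w : ι → ℝ} {δ c : ℝ}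
    (hlam : ∀ i ∈ s, δ ≤ lam i) (hc : ∀ i ∈ s, c ≤ w i) :
    c * ∑ i ∈ s, lam i - ∑ i ∈ s, lam i * w i ≤ -δ * ∑ i ∈ s, (w i - c) := by
  have hrw : c * ∑ i ∈ s, lam i - ∑ i ∈ s, lam i * w i = -∑ i ∈ s, lam i * (w i - c) := by
    simp only [mul_sub, sum_sub_distrib, ← sum_mul]; ring
  rw [hrw, neg_mul, neg_le_neg_iff, mul_sum]
  exact sum_le_sum fun i hi => mul_le_mul_of_nonneg_right (hlam i hi) (sub_nonneg.mpr (hc i hi))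

theorem stmt_7_general (M : ℕ) (δ : ℝ) (hδ : 0 < δ)
    (W lam : EuclideanSpace ℝ (Fin M)) (hlam : ∀ m, δ ≤ lam m)
    (m₀ : Fin M) (hm₀ : ∀ m, W m₀ ≤ W m) :
    W m₀ * (∑ m, lam m) - (∑ m, lam m * W m)
      ≤ -δ * ‖W - ((∑ m, W m) / (M : ℝ)) • onesVec M‖ := by
  have hnorm : ‖W - ((∑ m, W m) / (M : ℝ)) • onesVec M‖ ≤ ∑ m, (W m - W m₀) := calc
    _ ≤ ‖W - W m₀ • onesVec M‖ := norm_sub_mean_smul_onesVec_le W _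
    _ ≤ ∑ m, ‖(W - W m₀ • onesVec M) m‖ := EuclideanSpace.norm_le_sum_norm _
    _ = ∑ m, (W m - W m₀) := by
      simp [abs_of_nonneg (sub_nonneg.mpr (hm₀ _))]
  calc _ ≤ -δ * ∑ m, (W m - W m₀) :=
        mul_sum_sub_sum_mul_le _ (fun m _ => hlam m) (fun m _ => hm₀ m)
    _ ≤ _ := mul_le_mul_of_nonpos_left hnorm (neg_nonpos.mpr hδ.le)

/-- Key state-space-collapse inequality: if every component of `lam` is at least `δ`
and `m₀` is a coordinate achieving `min_m W m`, then
`(min_m W m)(∑ lam m) - ⟨lam, W⟩ ≤ -δ ‖W⊥‖` where `W⊥ = W - (W_Σ/M)𝟏`. -/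
theorem stmt_7 (M : ℕ) (hM : 1 ≤ M) (δ : ℝ) (hδ : 0 < δ)
    (W lam : EuclideanSpace ℝ (Fin M)) (hlam : ∀ m, δ ≤ lam m)
    (m₀ : Fin M) (hm₀ : ∀ m, W m₀ ≤ W m) :
    W m₀ * (∑ m, lam m) - (∑ m, lam m * W m)
      ≤ -δ * ‖W - ((∑ m, W m) / (M : ℝ)) • onesVec M‖ :=
  stmt_7_general M δ hδ W lam hlam m₀ hm₀
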